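/- Let G be a finite simple graph of order n with minimum degree δ, and let k be an integer. If S is a boundary defensive k-alliance in G, then ⌈(δ+k+2)/2⌉ ≤ |S| ≤ ⌊(2n-δ+k)/2⌋. -/

import Mathlib

/-!
Fix `v ∈ S` and split `deg v = δ_S(v) + δ_{V∖S}(v) ≥ δ`. Together with
`δ_S(v) = δ_{V∖S}(v) + k`, the bound `δ_S(v) ≤ |S| - 1` (`v` is not its own neighbour) gives
`2|S| ≥ δ + k + 2`, and `δ_{V∖S}(v) ≤ n - |S|` gives `2|S| ≤ 2n - δ + k`.
-/

open Finset

variable {V : Type*}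

/-- `degIn G S v` is the number of neighbors that `v` has in `S` (denoted `δ_S(v)`). -/
def degIn [Fintype V] [DecidableEq V] (G : SimpleGraph V) [DecidableRel G.Adj]
    (S : Finset V) (v : V) : ℕ :=
  (G.neighborFinset v ∩ S).card

/-- A nonempty set `S` is a defensive `k`-alliance in `G` if every vertex of `S` has at least
`k` more neighbors inside `S` than outside. -/
def IsDefensiveKAlliance [Fintype V] [DecidableEq V] (G : SimpleGraph V) [DecidableRel G.Adj]
    (k : ℤ) (S : Finset V) : Prop :=
  S.Nonempty ∧ ∀ v ∈ S, (degIn G Sᶜ v : ℤ) + k ≤ (degIn G S v : ℤ)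

/-- The defensive `k`-alliance number: minimum cardinality of a defensive `k`-alliance. -/
noncomputable def defensiveAllianceNum [Fintype V] [DecidableEq V] (G : SimpleGraph V)
    [DecidableRel G.Adj] (k : ℤ) : ℕ :=
  sInf {m : ℕ | ∃ S : Finset V, IsDefensiveKAlliance G k S ∧ S.card = m}

/-- A nonempty set `S` is a boundary defensive `k`-alliance in `G` if every vertex of `S` has
exactly `k` more neighbors inside `S` than outside. -/
def IsBoundaryDefensiveKAlliance [Fintype V] [DecidableEq V] (G : SimpleGraph V)
    [DecidableRel G.Adj] (k : ℤ) (S : Finset V) : Prop :=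
  S.Nonempty ∧ ∀ v ∈ S, (degIn G S v : ℤ) = (degIn G Sᶜ v : ℤ) + k

section

variable [Fintype V] [DecidableEq V] {G : SimpleGraph V} [DecidableRel G.Adj]
  {k : ℤ} {S : Finset V} {v : V}

variable (G S v) in
theorem degIn_add_degIn_compl : degIn G S v + degIn G Sᶜ v = G.degree v := by
  rw [degIn, degIn, ← Finset.sdiff_eq_inter_compl, Finset.card_inter_add_card_sdiff,
    SimpleGraph.card_neighborFinset_eq_degree]

theorem degIn_lt_card (hv : v ∈ S) : degIn G S v < S.card := by
  refine Finset.card_lt_card ⟨Finset.inter_subset_right, fun hsub => ?_⟩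
  exact G.irrefl (G.mem_neighborFinset v v |>.1 (Finset.mem_inter.1 (hsub hv)).1)

variable (S v) in
theorem degIn_compl_add_card_le : degIn G Sᶜ v + S.card ≤ Fintype.card V := by
  have hout : degIn G Sᶜ v ≤ Fintype.card V - S.card :=
    Finset.card_compl S ▸ Finset.card_le_card Finset.inter_subset_right
  have := S.card_le_univ
  omega

theorem IsBoundaryDefensiveKAlliance.isDefensiveKAlliance
    (hS : IsBoundaryDefensiveKAlliance G k S) : IsDefensiveKAlliance G k S :=
  ⟨hS.1, fun v hv => (hS.2 v hv).ge⟩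

theorem IsDefensiveKAlliance.minDegree_add_two_le (hS : IsDefensiveKAlliance G k S) :
    (G.minDegree : ℤ) + k + 2 ≤ 2 * S.card := by
  obtain ⟨⟨v, hv⟩, hall⟩ := hS
  have hsplit := degIn_add_degIn_compl G S v
  have hmin := G.minDegree_le_degree v
  have hin : degIn G S v < S.card := degIn_lt_card hv
  have := hall v hv
  omega

theorem IsBoundaryDefensiveKAlliance.two_mul_card_le (hS : IsBoundaryDefensiveKAlliance G k S) :
    2 * (S.card : ℤ) ≤ 2 * Fintype.card V - G.minDegree + k := by
  obtain ⟨⟨v, hv⟩, hall⟩ := hS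
  have hsplit := degIn_add_degIn_compl G S v
  have hmin := G.minDegree_le_degree v
  have hout := degIn_compl_add_card_le (G := G) S v
  have := hall v hv
  omega

end

theorem boundaryDefensiveKAlliance_card_bounds_general [Fintype V] [DecidableEq V]
    (G : SimpleGraph V) [DecidableRel G.Adj] (k : ℤ) (S : Finset V)
    (hS : IsBoundaryDefensiveKAlliance G k S) :
    ⌈((G.minDegree : ℚ) + (k : ℚ) + 2) / 2⌉ ≤ (S.card : ℤ) ∧
      (S.card : ℤ) ≤ ⌊(2 * (Fintype.card V : ℚ) - (G.minDegree : ℚ) + (k : ℚ)) / 2⌋ := by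
  have hlower : ((G.minDegree + k + 2 : ℤ) : ℚ) ≤ ((2 * S.card : ℤ) : ℚ) :=
    Int.cast_le.2 hS.isDefensiveKAlliance.minDegree_add_two_le
  have hupper : ((2 * S.card : ℤ) : ℚ) ≤ ((2 * Fintype.card V - G.minDegree + k : ℤ) : ℚ) :=
    Int.cast_le.2 hS.two_mul_card_le
  push_cast at hlower hupper
  constructor
  · rw [Int.ceil_le, div_le_iff₀ two_pos]
    push_cast
    linarith
  · rw [Int.le_floor, le_div_iff₀ two_pos]
    push_cast
    linarith

/-- Theorem: if `S` is a boundary defensive `k`-alliance in `G`, then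
`⌈(δ+k+2)/2⌉ ≤ |S| ≤ ⌊(2n-δ+k)/2⌋`. -/
theorem boundaryDefensiveKAlliance_card_bounds [Fintype V] [DecidableEq V] [Nonempty V]
    (G : SimpleGraph V) [DecidableRel G.Adj] (k : ℤ) (S : Finset V)
    (hS : IsBoundaryDefensiveKAlliance G k S) :
    ⌈((G.minDegree : ℚ) + (k : ℚ) + 2) / 2⌉ ≤ (S.card : ℤ) ∧
      (S.card : ℤ) ≤ ⌊(2 * (Fintype.card V : ℚ) - (G.minDegree : ℚ) + (k : ℚ)) / 2⌋ :=
  boundaryDefensiveKAlliance_card_bounds_general G k S hS
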